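/- Every boundary horofunction ξ on the hyperbolic plane (Poincaré disk model, base point 0) is of the form ξ(z) = −log((1−|z|²)/|z−e^{iθ}|²) · (−1), i.e. ξ(z) = log((1−|z|²)/|z−e^{iθ}|²), for some θ ∈ [0,2π]. Moreover, for x = tanh(r/2) with r > 0 and the four points a = x, b = ix, c = −x, d = −ix, one has ξ(a)+ξ(b)+ξ(c)+ξ(d) = log((1−x²)⁴/|e^{4iθ} − x⁴|²) ≤ 2·log((1−x²)/(1+x²)) < 0 for every such ξ. -/

import Mathlib

open Filter Topology Real

/-- Inverse hyperbolic cosine. -/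
noncomputable def arcosh (t : ℝ) : ℝ := Real.log (t + Real.sqrt (t ^ 2 - 1))

/-- The hyperbolic distance in the Poincaré disk model:
`cosh d(z,w) = 1 + 2|z−w|²/((1−|z|²)(1−|w|²))`. -/
noncomputable def distDisk (z w : ℂ) : ℝ :=
  _root_.arcosh (1 + 2 * ‖z - w‖ ^ 2 /
    ((1 - ‖z‖ ^ 2) * (1 - ‖w‖ ^ 2)))

/-- A boundary horofunction of the Poincaré disk, normalized at the base point `0`:
a locally (here: pointwise) uniform limit of `d(z_n, 0) − d(z_n, ·)` along a sequence
`z_n` escaping to the boundary circle. -/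
def IsBoundaryHorofunction (ξ : ℂ → ℝ) : Prop :=
  ∃ z : ℕ → ℂ, (∀ n, ‖z n‖ < 1) ∧
    Tendsto (fun n => ‖z n‖) atTop (𝓝 1) ∧
    ∀ w : ℂ, ‖w‖ < 1 →
      Tendsto (fun n => distDisk (z n) 0 - distDisk (z n) w) atTop (𝓝 (ξ w))

/-!
With `a = 1 - |u|²`, `cosh d(u, w) = b / a` for `b = a + 2|u - w|² / (1 - |w|²)`, so
`(1 - |u|²) e^{d(u, w)} = b + √(b² - a²)` is continuous in `u` on the whole plane. As `u` tends
to a point `ζ` of the unit circle, `d(u, 0) - d(u, w)` therefore tends to the logarithm of the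
ratio of its boundary values, `log ((1 - |w|²) / |w - ζ|²)`. A sequence escaping to the boundary
has, by compactness, a subsequence converging to such a `ζ = e^{iθ}`, which identifies the
horofunction. For the four points `±x, ±ix` the factors `w - e^{iθ}` multiply to
`e^{4iθ} - x⁴`, whose modulus is at least `1 - x⁴ = (1 - x²)(1 + x²)`.
-/
lemma arcosh_div_eq_log_sub {a b : ℝ} (ha : 0 < a) (hab : a ≤ b) :
    _root_.arcosh (b / a) = log (b + √(b ^ 2 - a ^ 2)) - log a := by
  have hb : 0 < b + √(b ^ 2 - a ^ 2) := by positivity [ha.trans_le hab]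
  have hsq : (b / a) ^ 2 - 1 = (b ^ 2 - a ^ 2) / a ^ 2 := by field_simp
  rw [_root_.arcosh, hsq, sqrt_div' _ (sq_nonneg a), sqrt_sq ha.le, ← add_div,
    log_div hb.ne' ha.ne']

/-- `(1 - |u|²) e^{d(u, w)}`, written so that it extends continuously to the boundary circle. -/
noncomputable def scaledExpDistDisk (w u : ℂ) : ℝ :=
  let a := 1 - ‖u‖ ^ 2
  let b := a + 2 * ‖u - w‖ ^ 2 / (1 - ‖w‖ ^ 2)
  b + √(b ^ 2 - a ^ 2)

lemma distDisk_eq_log_sub {u w : ℂ} (hu : ‖u‖ < 1) (hw : ‖w‖ < 1) :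
    distDisk u w = log (scaledExpDistDisk w u) - log (1 - ‖u‖ ^ 2) := by
  have ha : 0 < 1 - ‖u‖ ^ 2 := by nlinarith [norm_nonneg u]
  have hc : 0 < 1 - ‖w‖ ^ 2 := by nlinarith [norm_nonneg w]
  have hab : 1 - ‖u‖ ^ 2 ≤ 1 - ‖u‖ ^ 2 + 2 * ‖u - w‖ ^ 2 / (1 - ‖w‖ ^ 2) :=
    le_add_of_nonneg_right (by positivity)
  rw [distDisk, scaledExpDistDisk, ← arcosh_div_eq_log_sub ha hab]
  congr 1
  field_simp

lemma continuous_scaledExpDistDisk (w : ℂ) : Continuous (scaledExpDistDisk w) := by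
  unfold scaledExpDistDisk
  fun_prop

lemma scaledExpDistDisk_of_norm_eq_one {ζ w : ℂ} (hζ : ‖ζ‖ = 1) (hw : ‖w‖ ≤ 1) :
    scaledExpDistDisk w ζ = 4 * ‖ζ - w‖ ^ 2 / (1 - ‖w‖ ^ 2) := by
  have hb : 0 ≤ 2 * ‖ζ - w‖ ^ 2 / (1 - ‖w‖ ^ 2) := by
    have : 0 ≤ 1 - ‖w‖ ^ 2 := by nlinarith [norm_nonneg w]
    positivity
  simp only [scaledExpDistDisk, hζ, one_pow, sub_self, zero_add, ne_eq, OfNat.ofNat_ne_zero,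
    not_false_eq_true, zero_pow, sub_zero, sqrt_sq hb]
  ring

noncomputable def busemann (ζ w : ℂ) : ℝ := log ((1 - ‖w‖ ^ 2) / ‖w - ζ‖ ^ 2)

theorem tendsto_distDisk_sub_distDisk {ζ w : ℂ} (hζ : ‖ζ‖ = 1) (hw : ‖w‖ < 1) :
    Tendsto (fun u => distDisk u 0 - distDisk u w) (𝓝[Metric.ball 0 1] ζ)
      (𝓝 (busemann ζ w)) := by
  have hζw : 0 < ‖ζ - w‖ := norm_pos_iff.2 (sub_ne_zero.2 fun h => by simp_all)
  have hc : 0 < 1 - ‖w‖ ^ 2 := by nlinarith [norm_nonneg w]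
  have h0 : scaledExpDistDisk 0 ζ = 4 := by
    simpa [hζ] using scaledExpDistDisk_of_norm_eq_one (w := 0) hζ (by simp)
  have hw' := scaledExpDistDisk_of_norm_eq_one hζ hw.le
  have hlim : Tendsto (fun u => log (scaledExpDistDisk 0 u) - log (scaledExpDistDisk w u))
      (𝓝 ζ) (𝓝 (busemann ζ w)) := by
    have hval : log (scaledExpDistDisk 0 ζ) - log (scaledExpDistDisk w ζ) = busemann ζ w := by
      rw [busemann, h0, hw', ← log_div four_ne_zero (by positivity), norm_sub_rev ζ w]
      congr 1
      field_simp
    rw [← hval]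
    refine (((continuous_scaledExpDistDisk 0).tendsto ζ).log ?_).sub
      (((continuous_scaledExpDistDisk w).tendsto ζ).log ?_)
    · rw [h0]; exact four_ne_zero
    · rw [hw']; positivity
  refine (hlim.mono_left nhdsWithin_le_nhds).congr' (eventually_nhdsWithin_of_forall ?_)
  intro u hu
  rw [mem_ball_zero_iff] at hu
  dsimp only
  rw [distDisk_eq_log_sub hu (by simp), distDisk_eq_log_sub hu hw]
  ring

theorem IsBoundaryHorofunction.exists_eq_busemann {ξ : ℂ → ℝ} (hξ : IsBoundaryHorofunction ξ) :
    ∃ ζ : ℂ, ‖ζ‖ = 1 ∧ ∀ w : ℂ, ‖w‖ < 1 → ξ w = busemann ζ w := by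
  obtain ⟨z, hz, hz_norm, hz_lim⟩ := hξ
  obtain ⟨ζ, -, φ, hφ, hzφ⟩ := (isCompact_closedBall (0 : ℂ) 1).tendsto_subseq
    (x := z) fun n => mem_closedBall_zero_iff.2 (hz n).le
  have hζ : ‖ζ‖ = 1 :=
    tendsto_nhds_unique (hzφ.norm) (hz_norm.comp hφ.tendsto_atTop)
  have hzφ' : Tendsto (z ∘ φ) atTop (𝓝[Metric.ball 0 1] ζ) :=
    tendsto_nhdsWithin_iff.2 ⟨hzφ, Eventually.of_forall fun n => mem_ball_zero_iff.2 (hz _)⟩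
  exact ⟨ζ, hζ, fun w hw => tendsto_nhds_unique ((hz_lim w hw).comp hφ.tendsto_atTop)
    ((tendsto_distDisk_sub_distDisk hζ hw).comp hzφ')⟩

lemma exists_mem_Icc_exp_mul_I_eq {ζ : ℂ} (hζ : ‖ζ‖ = 1) :
    ∃ θ ∈ Set.Icc (0 : ℝ) (2 * π), Complex.exp (θ * Complex.I) = ζ := by
  let c : Circle := ⟨ζ, by simp [Submonoid.unitSphere, hζ]⟩
  refine ⟨Circle.angleDiff 1 c,
    ⟨Circle.angleDiff_nonneg _ _, (Circle.angleDiff_lt_two_pi _ _).le⟩, ?_⟩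
  simpa using congrArg Subtype.val (Circle.exp_angleDiff_mul (x := 1) (y := c))

lemma four_points_prod (x e : ℂ) :
    (x - e) * (x * Complex.I - e) * (-x - e) * (-x * Complex.I - e) = e ^ 4 - x ^ 4 := by
  linear_combination (x ^ 4 - x ^ 2 * e ^ 2) * Complex.I_sq

lemma busemann_four_points {e : ℂ} {x : ℝ} (he : ‖e‖ = 1) (hx : |x| < 1) :
    busemann e x + busemann e (x * Complex.I) + busemann e (-x) + busemann e (-x * Complex.I) =
      log ((1 - x ^ 2) ^ 4 / ‖e ^ 4 - (x : ℂ) ^ 4‖ ^ 2) := by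
  have hx2 : 0 < 1 - x ^ 2 := sub_pos.2 ((sq_lt_one_iff_abs_lt_one x).2 hx)
  have hpos : ∀ p : ℂ, ‖p‖ = |x| → 0 < (1 - ‖p‖ ^ 2) / ‖p - e‖ ^ 2 := fun p hp => by
    have : p ≠ e := fun h => by rw [h, he] at hp; linarith
    rw [hp, sq_abs]
    exact div_pos hx2 (pow_pos (norm_pos_iff.2 (sub_ne_zero.2 this)) 2)
  have h1 := hpos x (by simp)
  have h2 := hpos (x * Complex.I) (by simp)
  have h3 := hpos (-x) (by simp)
  have h4 := hpos (-x * Complex.I) (by simp)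
  simp only [busemann]
  rw [← log_mul h1.ne' h2.ne', ← log_mul (by positivity) h3.ne', ← log_mul (by positivity) h4.ne',
    ← four_points_prod]
  congr 1
  simp only [norm_mul, norm_neg, Complex.norm_I, Complex.norm_real, norm_eq_abs, mul_one,
    sq_abs]
  field_simp

lemma log_four_points_le {e : ℂ} {x : ℝ} (he : ‖e‖ = 1) (hx : |x| < 1) :
    log ((1 - x ^ 2) ^ 4 / ‖e ^ 4 - (x : ℂ) ^ 4‖ ^ 2) ≤ 2 * log ((1 - x ^ 2) / (1 + x ^ 2)) := by
  set K := ‖e ^ 4 - (x : ℂ) ^ 4‖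
  have hK : 1 - x ^ 4 ≤ K := by
    have h := norm_sub_norm_le (e ^ 4) ((x : ℂ) ^ 4)
    rwa [norm_pow, norm_pow, he, one_pow, Complex.norm_real, norm_eq_abs,
      (by decide : Even 4).pow_abs] at h
  have hx2 : 0 < 1 - x ^ 2 := sub_pos.2 ((sq_lt_one_iff_abs_lt_one x).2 hx)
  have hx4 : 0 < 1 - x ^ 4 := by nlinarith
  have hK0 : 0 < K := hx4.trans_le hK
  rw [show 2 * log ((1 - x ^ 2) / (1 + x ^ 2)) = log (((1 - x ^ 2) / (1 + x ^ 2)) ^ 2) by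
    rw [log_pow]; norm_num]
  apply log_le_log (by positivity)
  rw [div_pow, div_le_div_iff₀ (by positivity) (by positivity)]
  calc (1 - x ^ 2) ^ 4 * (1 + x ^ 2) ^ 2 = (1 - x ^ 2) ^ 2 * (1 - x ^ 4) ^ 2 := by ring
    _ ≤ (1 - x ^ 2) ^ 2 * K ^ 2 := by gcongr

lemma log_one_sub_sq_div_one_add_sq_neg {x : ℝ} (hx0 : x ≠ 0) (hx : |x| < 1) :
    log ((1 - x ^ 2) / (1 + x ^ 2)) < 0 := by
  have hx2 : 0 < 1 - x ^ 2 := sub_pos.2 ((sq_lt_one_iff_abs_lt_one x).2 hx)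
  apply log_neg (by positivity)
  rw [div_lt_one (by positivity)]
  linarith [pow_pos (abs_pos.2 hx0) 2, sq_abs x]

/-- Every boundary horofunction on the hyperbolic plane (Poincaré disk, base point `0`)
is of the form `ξ(z) = log((1−|z|²)/|z−e^{iθ}|²)` for some `θ ∈ [0,2π]`; moreover, for
`x = tanh(r/2)` with `r > 0` and the four points `a = x`, `b = ix`, `c = −x`, `d = −ix`,
`ξ(a)+ξ(b)+ξ(c)+ξ(d) = log((1−x²)⁴/|e^{4iθ} − x⁴|²) ≤ 2 log((1−x²)/(1+x²)) < 0`. -/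
theorem boundary_horofunctions_of_disk (ξ : ℂ → ℝ) (hξ : IsBoundaryHorofunction ξ) :
    ∃ θ ∈ Set.Icc (0 : ℝ) (2 * π),
      (∀ w : ℂ, ‖w‖ < 1 →
        ξ w = Real.log ((1 - ‖w‖ ^ 2) /
          ‖w - Complex.exp (θ * Complex.I)‖ ^ 2)) ∧
      ∀ r : ℝ, 0 < r →
        (fun x : ℝ =>
          ξ (x : ℂ) + ξ ((x : ℂ) * Complex.I) + ξ (-(x : ℂ)) + ξ (-(x : ℂ) * Complex.I) =
              Real.log ((1 - x ^ 2) ^ 4 /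
                ‖Complex.exp (4 * θ * Complex.I) - (x : ℂ) ^ 4‖ ^ 2) ∧
            ξ (x : ℂ) + ξ ((x : ℂ) * Complex.I) + ξ (-(x : ℂ)) + ξ (-(x : ℂ) * Complex.I) ≤
              2 * Real.log ((1 - x ^ 2) / (1 + x ^ 2)) ∧
            2 * Real.log ((1 - x ^ 2) / (1 + x ^ 2)) < 0)
          (Real.tanh (r / 2)) := by
  obtain ⟨ζ, hζ, hξζ⟩ := hξ.exists_eq_busemann
  obtain ⟨θ, hθ, rfl⟩ := exists_mem_Icc_exp_mul_I_eq hζ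
  refine ⟨θ, hθ, hξζ, fun r hr => ?_⟩
  have hx0 : tanh (r / 2) ≠ 0 := by
    rw [tanh_eq_sinh_div_cosh]
    exact div_ne_zero (sinh_pos_iff.2 (half_pos hr)).ne' (cosh_pos _).ne'
  have hx := abs_tanh_lt_one (r / 2)
  generalize tanh (r / 2) = x at hx0 hx ⊢
  have hexp : Complex.exp (4 * θ * Complex.I) = Complex.exp (θ * Complex.I) ^ 4 := by
    rw [← Complex.exp_nat_mul]; ring_nf
  have hnorm : ∀ p : ℂ, ‖p‖ = |x| → ‖p‖ < 1 := fun p hp => hp ▸ hx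
  beta_reduce
  rw [hξζ _ (hnorm _ (by simp)), hξζ _ (hnorm _ (by simp)), hξζ _ (hnorm _ (by simp)),
    hξζ _ (hnorm _ (by simp)), busemann_four_points hζ hx, hexp]
  exact ⟨rfl, log_four_points_le hζ hx, by linarith [log_one_sub_sq_div_one_add_sq_neg hx0 hx]⟩
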